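/- arXiv:2003.07508 — 5 statements merged into one kernel-verified Lean document; each statement's English description precedes it below -/
import Mathlib

section
/- For all natural numbers p ≥ 1 and m ≥ 0, the alternating weighted face-count sum equals its rearranged form: ∑_{k=0}^{2p} (-1)^k · 2^{m+k+1} · ( ∑_{j=0}^{p} C(j,k)·C(m+j, j) + ∑_{j=0}^{p-1} C(2p-j, k)·C(m+j, j) ) = 2^{m+1} · ( ∑_{j=0}^{p} (-1)^j · C(m+j, j) + ∑_{j=0}^{p-1} (-1)^j · C(m+j, j) ), as an identity of integers. (For a dual-neighborly simple polytope P of dimension 2p with n = 2p+m+1 facets, the left-hand side is the Euler characteristic χ(p,m) of the associated moment-angle manifold Z(P), computed from the face numbers f_k = ∑_{j=0}^{p} C(j,k)C(m+j,j) + ∑_{j=0}^{p-1} C(2p-j,k)C(m+j,j) of P, each k-face contributing 2^{m+k+1} cells of Z(P).) -/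
lemma binom_key (N n m : ℕ) (h : n ≤ N) :
    ∑ k ∈ Finset.range (N + 1), (-1 : ℤ) ^ k * 2 ^ (m + k + 1) * (n.choose k : ℤ)
      = 2 ^ (m + 1) * (-1) ^ n := by
  have hsub : Finset.range (n + 1) ⊆ Finset.range (N + 1) :=
    Finset.range_subset_range.mpr (by omega)
  rw [← Finset.sum_subset hsub (by
    intro k _ hk
    simp only [Finset.mem_range, not_lt] at hk
    rw [Nat.choose_eq_zero_of_lt (by omega)]
    ring)]
  have hb := add_pow (-2 : ℤ) 1 n
  simp only [one_pow, mul_one] at hb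
  norm_num at hb
  calc ∑ k ∈ Finset.range (n + 1), (-1 : ℤ) ^ k * 2 ^ (m + k + 1) * (n.choose k : ℤ)
      = 2 ^ (m + 1) * ∑ k ∈ Finset.range (n + 1), (-2 : ℤ) ^ k * (n.choose k : ℤ) := by
        rw [Finset.mul_sum]
        apply Finset.sum_congr rfl
        intro k _
        rw [pow_add, pow_add, neg_pow (2 : ℤ) k]
        ring
    _ = 2 ^ (m + 1) * (-1) ^ n := by rw [hb]

/-- For `p ≥ 1` and `m ≥ 0`, the alternating weighted face-count sum for a
dual-neighborly polytope of dimension `2p` with `2p+m+1` facets equals its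
rearranged form: this is the Euler characteristic `χ(p,m)` of the associated
moment-angle manifold. -/
theorem euler_char_face_sum_rearranged (p m : ℕ) (hp : 1 ≤ p) :
    ∑ k ∈ Finset.range (2 * p + 1), (-1 : ℤ) ^ k * 2 ^ (m + k + 1) *
        ((∑ j ∈ Finset.range (p + 1), (Nat.choose j k : ℤ) * (Nat.choose (m + j) j : ℤ)) +
         (∑ j ∈ Finset.range p, (Nat.choose (2 * p - j) k : ℤ) * (Nat.choose (m + j) j : ℤ)))
      = 2 ^ (m + 1) *
        ((∑ j ∈ Finset.range (p + 1), (-1 : ℤ) ^ j * (Nat.choose (m + j) j : ℤ)) +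
         (∑ j ∈ Finset.range p, (-1 : ℤ) ^ j * (Nat.choose (m + j) j : ℤ))) := by
  simp only [mul_add, Finset.mul_sum, Finset.sum_add_distrib]
  rw [Finset.sum_comm, Finset.sum_comm (s := Finset.range (2 * p + 1))]
  congr 1
  · apply Finset.sum_congr rfl
    intro j hj
    simp only [Finset.mem_range] at hj
    have := binom_key (2 * p) j m (by omega)
    calc ∑ k ∈ Finset.range (2 * p + 1),
          (-1 : ℤ) ^ k * 2 ^ (m + k + 1) * ((j.choose k : ℤ) * ((m + j).choose j : ℤ))
        = (∑ k ∈ Finset.range (2 * p + 1),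
            (-1 : ℤ) ^ k * 2 ^ (m + k + 1) * (j.choose k : ℤ)) * ((m + j).choose j : ℤ) := by
          rw [Finset.sum_mul]; apply Finset.sum_congr rfl; intro k _; ring
      _ = 2 ^ (m + 1) * ((-1) ^ j * ((m + j).choose j : ℤ)) := by rw [this]; ring
  · apply Finset.sum_congr rfl
    intro j hj
    simp only [Finset.mem_range] at hj
    have hk := binom_key (2 * p) (2 * p - j) m (by omega)
    have hsign : ((-1 : ℤ)) ^ (2 * p - j) = (-1) ^ j := by
      rcases Nat.even_or_odd j with h | h
      · have h2 : Even (2 * p - j) := by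
          obtain ⟨r, hr⟩ := h; exact ⟨p - r, by omega⟩
        rw [h2.neg_one_pow, h.neg_one_pow]
      · have h2 : Odd (2 * p - j) := by
          obtain ⟨r, hr⟩ := h; exact ⟨p - r - 1, by omega⟩
        rw [h2.neg_one_pow, h.neg_one_pow]
    calc ∑ k ∈ Finset.range (2 * p + 1),
          (-1 : ℤ) ^ k * 2 ^ (m + k + 1) * (((2 * p - j).choose k : ℤ) * ((m + j).choose j : ℤ))
        = (∑ k ∈ Finset.range (2 * p + 1),
            (-1 : ℤ) ^ k * 2 ^ (m + k + 1) * ((2 * p - j).choose k : ℤ)) * ((m + j).choose j : ℤ) := by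
          rw [Finset.sum_mul]; apply Finset.sum_congr rfl; intro k _; ring
      _ = 2 ^ (m + 1) * ((-1) ^ j * ((m + j).choose j : ℤ)) := by rw [hk, hsign]; ring
end

section
/- For all natural numbers p ≥ 1 and m ≥ 0, 2^{m+1} · ( ∑_{j=0}^{p} (-1)^j · C(m+j, j) + ∑_{j=0}^{p-1} (-1)^j · C(m+j, j) ) = 2 + (-1)^p · ∑_{j=0}^{m-1} 2^{j+1} · C(j+p, p), as an identity of integers (the sum on the right is empty, hence 0, when m = 0). This is the equivalence of forms (i) and (ii) of the Euler characteristic χ(p,m) of the moment-angle manifold associated to a dual-neighborly polytope of dimension 2p with 2p+m+1 facets. -/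
lemma euler_key (m p : ℕ) :
    (∑ j ∈ Finset.range (p + 1), (-1 : ℤ) ^ j * (Nat.choose (m + 1 + j) j : ℤ)) +
      (∑ j ∈ Finset.range p, (-1 : ℤ) ^ j * (Nat.choose (m + 1 + j) j : ℤ)) =
    ∑ j ∈ Finset.range (p + 1), (-1 : ℤ) ^ j * (Nat.choose (m + j) j : ℤ) := by
  induction p with
  | zero => simp
  | succ p ih =>
    have e1 := Finset.sum_range_succ (fun j => (-1 : ℤ) ^ j * (Nat.choose (m + 1 + j) j : ℤ)) (p + 1)
    have e2 := Finset.sum_range_succ (fun j => (-1 : ℤ) ^ j * (Nat.choose (m + 1 + j) j : ℤ)) p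
    have e3 := Finset.sum_range_succ (fun j => (-1 : ℤ) ^ j * (Nat.choose (m + j) j : ℤ)) (p + 1)
    rw [e1, e2, e3]
    rw [e2] at ih
    simp only [show m + 1 + p = m + p + 1 from by ring,
      show m + 1 + (p + 1) = m + p + 1 + 1 from by ring,
      show m + (p + 1) = m + p + 1 from by ring] at *
    have hpas : (Nat.choose (m + p + 1 + 1) (p + 1) : ℤ)
        = (Nat.choose (m + p + 1) p : ℤ) + (Nat.choose (m + p + 1) (p + 1) : ℤ) := by
      rw [Nat.choose_succ_succ]; push_cast; ring
    have hs : (-1 : ℤ) ^ (p + 1) = -(-1) ^ p := by ring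
    rw [hpas, hs]
    linarith [ih]

/-- Equivalence of forms (i) and (ii) of the Euler characteristic `χ(p,m)` of the
moment-angle manifold associated to a dual-neighborly polytope of dimension `2p`
with `2p+m+1` facets. -/
theorem euler_char_form_i_eq_form_ii (p m : ℕ) (hp : 1 ≤ p) :
    2 ^ (m + 1) *
        ((∑ j ∈ Finset.range (p + 1), (-1 : ℤ) ^ j * (Nat.choose (m + j) j : ℤ)) +
         (∑ j ∈ Finset.range p, (-1 : ℤ) ^ j * (Nat.choose (m + j) j : ℤ)))
      = 2 + (-1 : ℤ) ^ p * ∑ j ∈ Finset.range m, 2 ^ (j + 1) * (Nat.choose (j + p) p : ℤ) := by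
  induction m with
  | zero =>
    simp only [Nat.zero_add, Nat.choose_self, Nat.cast_one, mul_one, Finset.range_zero,
      Finset.sum_empty, mul_zero, add_zero]
    rw [neg_one_geom_sum, neg_one_geom_sum]
    rcases Nat.even_or_odd p with h | h
    · simp [Nat.even_add_one, h, Nat.not_even_iff_odd, Even.add_one]
    · simp [Nat.even_add_one, h, Nat.not_even_iff_odd, Odd.add_one]
  | succ m ih =>
    have key := euler_key m p
    have split : (∑ j ∈ Finset.range (p + 1), (-1 : ℤ) ^ j * (Nat.choose (m + j) j : ℤ))
        = (∑ j ∈ Finset.range p, (-1 : ℤ) ^ j * (Nat.choose (m + j) j : ℤ))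
          + (-1) ^ p * (Nat.choose (m + p) p : ℤ) := Finset.sum_range_succ _ p
    rw [Finset.sum_range_succ (n := m)]
    have hm : (Nat.choose (m + p) p : ℤ) = (Nat.choose (p + m) p : ℤ) := by rw [Nat.add_comm]
    calc 2 ^ (m + 1 + 1) *
          ((∑ j ∈ Finset.range (p + 1), (-1 : ℤ) ^ j * (Nat.choose (m + 1 + j) j : ℤ)) +
           (∑ j ∈ Finset.range p, (-1 : ℤ) ^ j * (Nat.choose (m + 1 + j) j : ℤ)))
        = 2 * (2 ^ (m + 1) * (∑ j ∈ Finset.range (p + 1), (-1 : ℤ) ^ j * (Nat.choose (m + j) j : ℤ))) := by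
          rw [← key]; ring
      _ = 2 ^ (m + 1) *
          ((∑ j ∈ Finset.range (p + 1), (-1 : ℤ) ^ j * (Nat.choose (m + j) j : ℤ)) +
           (∑ j ∈ Finset.range p, (-1 : ℤ) ^ j * (Nat.choose (m + j) j : ℤ)))
          + 2 ^ (m + 1) * ((-1) ^ p * (Nat.choose (m + p) p : ℤ)) := by
          rw [split]; ring
      _ = _ := by
          rw [ih, Nat.add_comm m p] at *
          ring
end

section
/- Fix a natural number p ≥ 1 and let χ(p,m) = 2^{m+1} · ( ∑_{j=0}^{p} (-1)^j · C(m+j, j) + ∑_{j=0}^{p-1} (-1)^j · C(m+j, j) ) for m ≥ 0. Then in the ring of formal power series ℤ[[z]], the generating function F_p(z) = ∑_{m≥0} χ(p,m) z^m satisfies (1 - z) · (1 - 2z)^{p+1} · F_p(z) = 2·(1 - 2z)^{p+1} + (-1)^p · 2z. (Equivalently, F_p(z) = 2/(1-z) + 2z/((z-1)(2z-1)^{p+1}), which is form (iii) of Theorem 1.) -/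
open PowerSeries

namespace EGF

noncomputable def A (j : ℕ) : PowerSeries ℤ :=
  PowerSeries.mk fun m => 2 ^ m * (Nat.choose (m + j) j : ℤ)

lemma two_eq : (2 : PowerSeries ℤ) = C 2 := by simp

lemma step (j : ℕ) : (1 - 2 * X) * A (j + 1) = A j := by
  ext n
  rw [show (1 - 2 * X : PowerSeries ℤ) * A (j+1) = A (j+1) - 2 * (X * A (j+1)) by ring, two_eq]
  cases n with
  | zero => simp [A]
  | succ n =>
    simp only [map_sub, A, coeff_mk, coeff_C_mul, coeff_succ_X_mul]
    have h : (n + 1 + (j + 1)).choose (j + 1) = (n + 1 + j).choose j + (n + (j+1)).choose (j+1) := by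
      rw [show n + 1 + (j + 1) = (n + 1 + j) + 1 from rfl, Nat.choose_succ_succ']
      congr 2
      omega
    rw [h]
    push_cast
    ring

lemma base : (1 - 2 * X) * A 0 = 1 := by
  ext n
  rw [show (1 - 2 * X : PowerSeries ℤ) * A 0 = A 0 - 2 * (X * A 0) by ring, two_eq]
  cases n with
  | zero => simp [A]
  | succ n =>
    simp only [map_sub, A, coeff_mk, coeff_C_mul, coeff_succ_X_mul]
    simp
    ring

lemma inv (j : ℕ) : (1 - 2 * X) ^ (j + 1) * A j = 1 := by
  induction j with
  | zero => simpa using base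
  | succ j ih =>
    rw [pow_succ, show (1-2*X:PowerSeries ℤ)^(j+1) * (1-2*X) * A (j+1)
        = (1-2*X)^(j+1) * ((1-2*X) * A (j+1)) by ring, step, ih]

end EGF

namespace EGF

noncomputable def B (k : ℕ) : PowerSeries ℤ := ∑ j ∈ Finset.range (k+1), (-1 : PowerSeries ℤ)^j * A j

lemma neg_one_pow (j : ℕ) : ((-1 : PowerSeries ℤ))^j = C ((-1 : ℤ)^j) := by
  rw [map_pow, map_neg, map_one]

lemma mk_decomp (k : ℕ) :
    PowerSeries.mk (fun m : ℕ =>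
          2 ^ (m + 1) *
            ((∑ j ∈ Finset.range (k + 1 + 1), (-1 : ℤ) ^ j * (Nat.choose (m + j) j : ℤ)) +
             (∑ j ∈ Finset.range (k + 1), (-1 : ℤ) ^ j * (Nat.choose (m + j) j : ℤ))))
      = 2 * (B (k+1) + B k) := by
  ext n
  rw [two_eq]
  simp only [coeff_mk, coeff_C_mul, map_add, B, map_sum, neg_one_pow, A]
  have pull : ∀ s : Finset ℕ, ∑ j ∈ s, (-1:ℤ)^j * (2^n * (Nat.choose (n + j) j : ℤ))
      = 2^n * ∑ j ∈ s, (-1:ℤ)^j * (Nat.choose (n + j) j : ℤ) := by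
    intro s
    rw [Finset.mul_sum]
    exact Finset.sum_congr rfl fun j _ => by ring
  rw [pull, pull]
  ring

lemma hB (k : ℕ) : (1 - 2*X)^(k+1) * B k
    = ∑ j ∈ Finset.range (k+1), (-1 : PowerSeries ℤ)^j * (1 - 2*X)^(k-j) := by
  rw [B, Finset.mul_sum]
  refine Finset.sum_congr rfl fun j hj => ?_
  have hjk : j ≤ k := by simpa [Nat.lt_succ_iff] using hj
  rw [show (k+1) = (k-j) + (j+1) by omega, pow_add,
    show (1-2*X:PowerSeries ℤ)^(k-j) * (1-2*X)^(j+1) * ((-1)^j * A j)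
      = (-1)^j * (1-2*X)^(k-j) * ((1-2*X)^(j+1) * A j) by ring, inv, mul_one]

lemma hG (k : ℕ) : (2 - 2*X : PowerSeries ℤ) *
      (∑ j ∈ Finset.range (k+1), (-1 : PowerSeries ℤ)^j * (1 - 2*X)^(k-j))
    = (1 - 2*X)^(k+1) - (-1)^(k+1) := by
  have hg := geom_sum₂_mul (1 - 2*X : PowerSeries ℤ) (-1) (k+1)
  have hr : ∑ j ∈ Finset.range (k+1), (-1 : PowerSeries ℤ)^j * (1 - 2*X)^(k-j)
      = ∑ i ∈ Finset.range (k+1), (1 - 2*X : PowerSeries ℤ)^i * (-1)^(k+1-1-i) := by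
    rw [← Finset.sum_range_reflect]
    refine Finset.sum_congr rfl fun j hj => ?_
    have hjk : j ≤ k := by simpa [Nat.lt_succ_iff] using hj
    rw [show k + 1 - 1 - j = k - j from rfl, show k - (k-j) = j by omega]
    ring
  rw [hr]
  linear_combination hg

end EGF


open EGF in
/-- Form (iii) of Theorem 1: for fixed `p ≥ 1`, the generating function
`F_p(z) = ∑_{m ≥ 0} χ(p,m) z^m` of the Euler characteristics satisfies
`(1 - z)(1 - 2z)^{p+1} F_p(z) = 2(1 - 2z)^{p+1} + (-1)^p · 2z` in `ℤ⟦z⟧`. -/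
theorem euler_char_generating_function (p : ℕ) (hp : 1 ≤ p) :
    (1 - (PowerSeries.X : PowerSeries ℤ)) * (1 - 2 * PowerSeries.X) ^ (p + 1) *
        PowerSeries.mk (fun m : ℕ =>
          2 ^ (m + 1) *
            ((∑ j ∈ Finset.range (p + 1), (-1 : ℤ) ^ j * (Nat.choose (m + j) j : ℤ)) +
             (∑ j ∈ Finset.range p, (-1 : ℤ) ^ j * (Nat.choose (m + j) j : ℤ))))
      = 2 * (1 - 2 * PowerSeries.X) ^ (p + 1) + (-1 : PowerSeries ℤ) ^ p * (2 * PowerSeries.X) := by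
  obtain ⟨q, rfl⟩ : ∃ q, p = q + 1 := ⟨p - 1, by omega⟩
  rw [mk_decomp q]
  have e1 := hB (q+1)
  have e2 := hB q
  have g1 := hG (q+1)
  have g2 := hG q
  linear_combination ((2:PowerSeries ℤ) - 2*X) * e1 + ((2:PowerSeries ℤ) - 2*X)*(1-2*X) * e2
    + g1 + (1-2*X) * g2
end

section
/- For all natural numbers p ≥ 1 and m ≥ 0, (-1)^p · 2^m · ( ∑_{j=0}^{p} (-1)^j · C(m+j, j) + ∑_{j=0}^{p-1} (-1)^j · C(m+j, j) ) − (-1)^p = ∑_{j=0}^{m-1} C(j+p, p) · 2^j, as an identity of integers (the sum on the right is empty, hence 0, when m = 0). This is the equivalence of forms (i) and (ii) for the genus g(p,m) of the moment-angle manifold associated to a dual-neighborly polytope of dimension 2p with 2p+m+1 facets. -/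
lemma genus_key (p m : ℕ) :
    (∑ j ∈ Finset.range (p + 1), (-1 : ℤ) ^ j * (Nat.choose (m + 1 + j) j : ℤ)) +
    (∑ j ∈ Finset.range p, (-1 : ℤ) ^ j * (Nat.choose (m + 1 + j) j : ℤ)) =
    ∑ j ∈ Finset.range (p + 1), (-1 : ℤ) ^ j * (Nat.choose (m + j) j : ℤ) := by
  induction p with
  | zero => simp
  | succ p ih =>
    rw [Finset.sum_range_succ (f := fun j => (-1 : ℤ) ^ j * (Nat.choose (m + 1 + j) j : ℤ)) (n := p + 1),
        Finset.sum_range_succ (f := fun j => (-1 : ℤ) ^ j * (Nat.choose (m + 1 + j) j : ℤ)) (n := p),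
        Finset.sum_range_succ (f := fun j => (-1 : ℤ) ^ j * (Nat.choose (m + j) j : ℤ)) (n := p + 1)]
    have pascal : (Nat.choose (m + 1 + (p + 1)) (p + 1) : ℤ)
        = (Nat.choose (m + (p + 1)) (p + 1) : ℤ) + (Nat.choose (m + 1 + p) p : ℤ) := by
      have h1 : m + 1 + (p + 1) = (m + p + 1) + 1 := by omega
      have h2 : m + (p + 1) = m + p + 1 := by omega
      have h3 : m + 1 + p = m + p + 1 := by omega
      rw [h1, h2, h3, Nat.choose_succ_succ]
      push_cast; ring
    rw [pascal]
    have hpow : (-1 : ℤ) ^ (p + 1) = -(-1 : ℤ) ^ p := by ring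
    rw [hpow]
    have hs := Finset.sum_range_succ (fun j => (-1 : ℤ) ^ j * (Nat.choose (m + 1 + j) j : ℤ)) p
    linear_combination ih - hs

/-- Equivalence of forms (i) and (ii) for the genus `g(p,m)` of the moment-angle
manifold associated to a dual-neighborly polytope of dimension `2p` with
`2p+m+1` facets. -/
theorem genus_form_i_eq_form_ii (p m : ℕ) (hp : 1 ≤ p) :
    (-1 : ℤ) ^ p * 2 ^ m *
        ((∑ j ∈ Finset.range (p + 1), (-1 : ℤ) ^ j * (Nat.choose (m + j) j : ℤ)) +
         (∑ j ∈ Finset.range p, (-1 : ℤ) ^ j * (Nat.choose (m + j) j : ℤ)))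
      - (-1 : ℤ) ^ p
      = ∑ j ∈ Finset.range m, (Nat.choose (j + p) p : ℤ) * 2 ^ j := by
  induction m with
  | zero =>
    simp only [Nat.zero_add, Nat.choose_self, Nat.cast_one, mul_one, Finset.range_zero,
      Finset.sum_empty, pow_zero]
    rcases Nat.even_or_odd p with h | h
    · simp [neg_one_geom_sum, Nat.even_add_one, h, h.neg_one_pow]
    · simp [neg_one_geom_sum, Nat.even_add_one, Nat.not_even_iff_odd.mpr h, h.neg_one_pow]
  | succ m ih =>
    rw [Finset.sum_range_succ (f := fun j => (Nat.choose (j + p) p : ℤ) * 2 ^ j), ← ih]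
    have hA := genus_key p m
    have hAB : (∑ j ∈ Finset.range (p + 1), (-1 : ℤ) ^ j * (Nat.choose (m + j) j : ℤ))
        = (∑ j ∈ Finset.range p, (-1 : ℤ) ^ j * (Nat.choose (m + j) j : ℤ))
          + (-1 : ℤ) ^ p * (Nat.choose (m + p) p : ℤ) :=
      Finset.sum_range_succ _ p
    have hsq : (-1 : ℤ) ^ p * (-1 : ℤ) ^ p = 1 := by
      rw [← mul_pow]; norm_num
    rw [pow_succ]
    linear_combination ((-1 : ℤ) ^ p * 2 ^ m * 2) * hA + ((-1 : ℤ) ^ p * 2 ^ m) * hAB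
      + ((Nat.choose (m + p) p : ℤ) * 2 ^ m) * hsq
end

section
/- Fix a natural number r ≥ 0 and define S(r,m) = 2 · ∑_{j=0}^{r} (-1)^j · 2^m · C(m+j, j) for m ≥ 0. Then in the ring of formal power series ℤ[[z]], the generating function T_r(z) = ∑_{m≥0} S(r,m) z^m satisfies (1 - z) · (1 - 2z)^{r+1} · T_r(z) = (1 - 2z)^{r+1} + (-1)^r. (Equivalently, T_r(z) = 1/(1-z) + 1/((z-1)(2z-1)^{r+1}).) -/
open PowerSeries


lemma mul_sub_helper (f : PowerSeries ℤ) (k : ℕ) :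
    (PowerSeries.coeff (k+1)) ((1 - 2 * PowerSeries.X) * f)
      = PowerSeries.coeff (k+1) f - 2 * PowerSeries.coeff k f := by
  rw [sub_mul, one_mul, mul_assoc, map_sub, mul_left_comm, coeff_succ_X_mul,
    show (2 : PowerSeries ℤ) = C 2 by norm_num, coeff_C_mul]

lemma coeff_zero_helper (f : PowerSeries ℤ) :
    (PowerSeries.coeff 0) ((1 - 2 * PowerSeries.X) * f) = PowerSeries.coeff 0 f := by
  rw [sub_mul, one_mul, mul_assoc, map_sub]
  simp

lemma inv_lemma (n : ℕ) :
    (1 - 2 * PowerSeries.X) ^ (n + 1) *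
      PowerSeries.mk (fun m : ℕ => (2 : ℤ) ^ m * ((m + n).choose n : ℤ)) = 1 := by
  induction n with
  | zero =>
    ext k
    cases k with
    | zero => simp [coeff_zero_helper]
    | succ k =>
      rw [pow_one, mul_sub_helper]
      simp [pow_succ]
      ring
  | succ n ih =>
    have step : (1 - 2 * PowerSeries.X) *
        PowerSeries.mk (fun m : ℕ => (2 : ℤ) ^ m * ((m + (n+1)).choose (n+1) : ℤ))
        = PowerSeries.mk (fun m : ℕ => (2 : ℤ) ^ m * ((m + n).choose n : ℤ)) := by
      ext k
      cases k with
      | zero => simp [coeff_zero_helper]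
      | succ k =>
        rw [mul_sub_helper]
        simp only [coeff_mk]
        have h : (k + 1 + (n + 1)).choose (n + 1)
            = (k + n + 1).choose n + (k + n + 1).choose (n + 1) := by
          rw [show k + 1 + (n + 1) = (k + n + 1) + 1 by ring, Nat.choose_succ_succ]
        rw [h]
        push_cast
        rw [show k + (n+1) = k + n + 1 by ring]
        ring
    calc (1 - 2 * PowerSeries.X) ^ (n + 1 + 1) *
          PowerSeries.mk (fun m : ℕ => (2 : ℤ) ^ m * ((m + (n+1)).choose (n+1) : ℤ))
        = (1 - 2 * PowerSeries.X) ^ (n + 1) * ((1 - 2 * PowerSeries.X) *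
          PowerSeries.mk (fun m : ℕ => (2 : ℤ) ^ m * ((m + (n+1)).choose (n+1) : ℤ))) := by ring
      _ = 1 := by rw [step, ih]

/-- For fixed `r ≥ 0` and `S(r,m) = 2 ∑_{j=0}^{r} (-1)^j 2^m C(m+j, j)`, the generating
function `T_r(z) = ∑_{m ≥ 0} S(r,m) z^m` satisfies
`(1 - z)(1 - 2z)^{r+1} T_r(z) = (1 - 2z)^{r+1} + (-1)^r` in `ℤ⟦z⟧`. -/
theorem partial_sum_generating_function (r : ℕ) :
    (1 - (PowerSeries.X : PowerSeries ℤ)) * (1 - 2 * PowerSeries.X) ^ (r + 1) *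
        PowerSeries.mk (fun m : ℕ =>
          2 * ∑ j ∈ Finset.range (r + 1), (-1 : ℤ) ^ j * 2 ^ m * (Nat.choose (m + j) j : ℤ))
      = (1 - 2 * PowerSeries.X) ^ (r + 1) + (-1 : PowerSeries ℤ) ^ r := by
  induction r with
  | zero =>
    have : PowerSeries.mk (fun m : ℕ =>
        2 * ∑ j ∈ Finset.range 1, (-1 : ℤ) ^ j * 2 ^ m * (Nat.choose (m + j) j : ℤ))
        = 2 * PowerSeries.mk (fun m : ℕ => (2 : ℤ) ^ m * ((m + 0).choose 0 : ℤ)) := by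
      ext k
      rw [show (2 : PowerSeries ℤ) = C 2 by norm_num, coeff_C_mul]
      simp
    rw [this, show (1 - (PowerSeries.X : PowerSeries ℤ)) * (1 - 2 * PowerSeries.X) ^ (0 + 1) *
        (2 * PowerSeries.mk (fun m : ℕ => (2 : ℤ) ^ m * ((m + 0).choose 0 : ℤ)))
      = (1 - (PowerSeries.X : PowerSeries ℤ)) * 2 * ((1 - 2 * PowerSeries.X) ^ (0 + 1) *
        PowerSeries.mk (fun m : ℕ => (2 : ℤ) ^ m * ((m + 0).choose 0 : ℤ))) by ring,
      inv_lemma]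
    ring
  | succ r ih =>
    have split : PowerSeries.mk (fun m : ℕ =>
        2 * ∑ j ∈ Finset.range (r + 2), (-1 : ℤ) ^ j * 2 ^ m * (Nat.choose (m + j) j : ℤ))
        = PowerSeries.mk (fun m : ℕ =>
            2 * ∑ j ∈ Finset.range (r + 1), (-1 : ℤ) ^ j * 2 ^ m * (Nat.choose (m + j) j : ℤ))
          + (2 * (-1 : PowerSeries ℤ) ^ (r+1)) *
            PowerSeries.mk (fun m : ℕ => (2 : ℤ) ^ m * ((m + (r+1)).choose (r+1) : ℤ)) := by
      ext k
      rw [map_add, show (2 * (-1 : PowerSeries ℤ) ^ (r+1)) = C (2 * (-1)^(r+1)) by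
        simp [map_mul, map_pow], coeff_C_mul]
      simp only [coeff_mk, Finset.sum_range_succ]
      ring
    rw [split, mul_add]
    have h2 : (1 - (PowerSeries.X : PowerSeries ℤ)) * (1 - 2 * PowerSeries.X) ^ (r + 1 + 1) *
        ((2 * (-1 : PowerSeries ℤ) ^ (r+1)) *
          PowerSeries.mk (fun m : ℕ => (2 : ℤ) ^ m * ((m + (r+1)).choose (r+1) : ℤ)))
        = (1 - PowerSeries.X) * (2 * (-1 : PowerSeries ℤ) ^ (r+1)) := by
      rw [show (1 - (PowerSeries.X : PowerSeries ℤ)) * (1 - 2 * PowerSeries.X) ^ (r + 1 + 1) *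
          ((2 * (-1 : PowerSeries ℤ) ^ (r+1)) *
            PowerSeries.mk (fun m : ℕ => (2 : ℤ) ^ m * ((m + (r+1)).choose (r+1) : ℤ)))
        = (1 - PowerSeries.X) * (2 * (-1 : PowerSeries ℤ) ^ (r+1)) *
            ((1 - 2 * PowerSeries.X) ^ (r + 1 + 1) *
            PowerSeries.mk (fun m : ℕ => (2 : ℤ) ^ m * ((m + (r+1)).choose (r+1) : ℤ))) by ring,
        inv_lemma, mul_one]
    have h1 : (1 - (PowerSeries.X : PowerSeries ℤ)) * (1 - 2 * PowerSeries.X) ^ (r + 1 + 1) *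
        PowerSeries.mk (fun m : ℕ =>
          2 * ∑ j ∈ Finset.range (r + 1), (-1 : ℤ) ^ j * 2 ^ m * (Nat.choose (m + j) j : ℤ))
        = (1 - 2 * PowerSeries.X) * ((1 - 2 * PowerSeries.X) ^ (r + 1) + (-1 : PowerSeries ℤ) ^ r) := by
      rw [← ih]; ring
    rw [h1, h2, pow_succ (-1 : PowerSeries ℤ) r]
    ring
end
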